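/- arXiv:2306.09084 — 2 statements merged into one kernel-verified Lean document; each statement's English description precedes it below -/
import Mathlib

section
/- Let ζ > 0 and 0 < b < ζ/(2+ζ). Then there exists δ ∈ (0, ζ] satisfying ζ² − δ² = 4b² (cosh(δ/2) + (ζ/δ) sinh(δ/2))². -/
open Real

/-- For `ζ > 0` and `0 < b < ζ/(2+ζ)`, there exists `δ ∈ (0, ζ]` solving
`ζ² − δ² = 4b² (cosh(δ/2) + (ζ/δ) sinh(δ/2))²`. -/
theorem exists_delta (ζ b : ℝ) (hζ : 0 < ζ) (hb : 0 < b)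
    (hb' : b < ζ / (2 + ζ)) :
    ∃ δ ∈ Set.Ioc 0 ζ, ζ ^ 2 - δ ^ 2 =
      4 * b ^ 2 * (Real.cosh (δ / 2) + (ζ / δ) * Real.sinh (δ / 2)) ^ 2 := by
  set g : ℝ → ℝ := fun δ => ζ ^ 2 - δ ^ 2 -
      4 * b ^ 2 * (Real.cosh (δ / 2) + (ζ / δ) * Real.sinh (δ / 2)) ^ 2 with hg
  -- limit of g at 0⁺ is L := ζ² - b²(2+ζ)² > 0
  have hL : (0:ℝ) < ζ ^ 2 - b ^ 2 * (2 + ζ) ^ 2 := by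
    have h1 : b * (2 + ζ) < ζ := by
      rw [lt_div_iff₀ (by linarith)] at hb'
      linarith
    nlinarith [mul_pos hb (show (0:ℝ) < 2 + ζ by linarith)]
  have hslope : Filter.Tendsto (fun x : ℝ => Real.sinh x / x) (nhdsWithin 0 {0}ᶜ) (nhds 1) := by
    have h := (Real.hasDerivAt_sinh 0)
    have := hasDerivAt_iff_tendsto_slope.mp h
    simpa [slope_fun_def, Real.sinh_zero, Real.cosh_zero, div_eq_inv_mul] using this
  have hhalf : Filter.Tendsto (fun δ : ℝ => δ / 2) (nhdsWithin 0 (Set.Ioi 0))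
      (nhdsWithin 0 {0}ᶜ) := by
    apply tendsto_nhdsWithin_of_tendsto_nhds_of_eventually_within
    · simpa using (((continuous_id (X := ℝ)).div_const 2).tendsto 0).mono_left
        (nhdsWithin_le_nhds (s := Set.Ioi (0:ℝ)))
    · filter_upwards [self_mem_nhdsWithin] with x hx
      have hx0 : (0:ℝ) < x := hx
      simp [ne_of_gt (by positivity : (0:ℝ) < x / 2)]
  have hratio : Filter.Tendsto (fun δ : ℝ => Real.sinh (δ / 2) / (δ / 2))
      (nhdsWithin 0 (Set.Ioi 0)) (nhds 1) := hslope.comp hhalf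
  have hcosh : Filter.Tendsto (fun δ : ℝ => Real.cosh (δ / 2)) (nhdsWithin 0 (Set.Ioi 0))
      (nhds 1) := by
    have : Filter.Tendsto (fun δ : ℝ => Real.cosh (δ / 2)) (nhds 0) (nhds 1) := by
      have := (Real.continuous_cosh.comp ((continuous_id (X := ℝ)).div_const 2)).tendsto 0
      simpa [Function.comp_def] using this
    exact this.mono_left nhdsWithin_le_nhds
  have hgL : Filter.Tendsto g (nhdsWithin 0 (Set.Ioi 0))
      (nhds (ζ ^ 2 - b ^ 2 * (2 + ζ) ^ 2)) := by
    have heq : ∀ δ ∈ Set.Ioi (0:ℝ), g δ = ζ ^ 2 - δ ^ 2 -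
        4 * b ^ 2 * (Real.cosh (δ / 2) + ζ / 2 * (Real.sinh (δ / 2) / (δ / 2))) ^ 2 := by
      intro δ hδ
      have hδ0 : δ ≠ 0 := ne_of_gt hδ
      rw [hg]
      field_simp
    have hmain : Filter.Tendsto (fun δ : ℝ => ζ ^ 2 - δ ^ 2 -
        4 * b ^ 2 * (Real.cosh (δ / 2) + ζ / 2 * (Real.sinh (δ / 2) / (δ / 2))) ^ 2)
        (nhdsWithin 0 (Set.Ioi 0)) (nhds (ζ ^ 2 - b ^ 2 * (2 + ζ) ^ 2)) := by
      have hδ2 : Filter.Tendsto (fun δ : ℝ => δ ^ 2) (nhdsWithin 0 (Set.Ioi 0))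
          (nhds 0) := by
        have := ((continuous_pow 2).tendsto (0:ℝ)).mono_left
          (nhdsWithin_le_nhds (s := Set.Ioi (0:ℝ)))
        simpa using this
      have h := (Filter.Tendsto.const_sub (ζ ^ 2) hδ2).sub
        ((Filter.Tendsto.const_mul (4 * b ^ 2)
          ((hcosh.add (hratio.const_mul (ζ / 2))).pow 2)))
      convert h using 2 <;> ring
    exact Filter.Tendsto.congr' (by
      filter_upwards [self_mem_nhdsWithin] with δ hδ using (heq δ hδ).symm) hmain
  -- get δ₀ > 0 small with g δ₀ > 0 and δ₀ < ζ
  have hev : ∀ᶠ δ in nhdsWithin 0 (Set.Ioi 0), 0 < g δ :=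
    hgL.eventually (eventually_gt_nhds hL)
  have hev2 : ∀ᶠ δ in nhdsWithin 0 (Set.Ioi 0), δ < ζ :=
    (eventually_lt_nhds hζ).filter_mono nhdsWithin_le_nhds
  obtain ⟨δ₀, hδ₀g, hδ₀ζ, hδ₀0⟩ := (hev.and (hev2.and self_mem_nhdsWithin)).exists
  have hδ₀0 : (0:ℝ) < δ₀ := hδ₀0
  -- continuity of g on [δ₀, ζ]
  have hcont : ContinuousOn g (Set.Icc δ₀ ζ) := by
    apply ContinuousOn.sub
    · apply ContinuousOn.sub
      · exact continuousOn_const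
      · exact (continuous_id.pow 2).continuousOn
    · apply ContinuousOn.mul continuousOn_const
      apply ContinuousOn.pow
      apply ContinuousOn.add
      · exact (Real.continuous_cosh.comp (continuous_id.div_const 2)).continuousOn
      · apply ContinuousOn.mul
        · exact ContinuousOn.div continuousOn_const continuousOn_id
            fun x hx => ne_of_gt (lt_of_lt_of_le hδ₀0 hx.1)
        · exact (Real.continuous_sinh.comp (continuous_id.div_const 2)).continuousOn
  have hgζ : g ζ ≤ 0 := by
    have : g ζ = -(4 * b ^ 2 * (Real.cosh (ζ / 2) + (ζ / ζ) * Real.sinh (ζ / 2)) ^ 2) := by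
      rw [hg]; ring
    rw [this]
    have h2 : 0 ≤ 4 * b ^ 2 * (Real.cosh (ζ / 2) + (ζ / ζ) * Real.sinh (ζ / 2)) ^ 2 := by
      positivity
    linarith
  have hsub : Set.Icc (g ζ) (g δ₀) ⊆ g '' Set.Icc δ₀ ζ :=
    intermediate_value_Icc' hδ₀ζ.le hcont
  have h0mem : (0:ℝ) ∈ Set.Icc (g ζ) (g δ₀) := ⟨hgζ, hδ₀g.le⟩
  obtain ⟨δ, hδmem, hδeq⟩ := hsub h0mem
  refine ⟨δ, ⟨lt_of_lt_of_le hδ₀0 hδmem.1, hδmem.2⟩, ?_⟩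
  have : ζ ^ 2 - δ ^ 2 -
      4 * b ^ 2 * (Real.cosh (δ / 2) + (ζ / δ) * Real.sinh (δ / 2)) ^ 2 = 0 := hδeq
  linarith
end

section
/- Let b > 0 and let λ ∈ (0, π/2) satisfy λ² / cos²λ = b². Then J_B(b, 0) = 2b² (sin(2λ)/λ − cos²λ). -/
open MeasureTheory Real Filter

/-- The rate function `J_B(b, ζ)`: the infimum, over measurable `g : [0,1] → ℝ`
with `∫₀¹ g(t)² dt < ∞`, of
`2b² ∫₀¹ exp(∫₀ᵗ g(s) ds) dt + (1/2) ∫₀¹ (g(t) − ζ)² dt`. -/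
noncomputable def JB (b ζ : ℝ) : ℝ :=
  sInf {y : ℝ | ∃ g : ℝ → ℝ, Measurable g ∧
    IntegrableOn (fun t => (g t) ^ 2) (Set.Icc 0 1) ∧
    y = 2 * b ^ 2 * (∫ t in (0:ℝ)..1, Real.exp (∫ s in (0:ℝ)..t, g s)) +
        (1 / 2) * ∫ t in (0:ℝ)..1, (g t - ζ) ^ 2}


noncomputable def gstar (L t : ℝ) : ℝ := -(2*L) * Real.tan (L*(1-t))
noncomputable def hstar (L t : ℝ) : ℝ :=
  2*Real.log (Real.cos L) - 2*Real.log (Real.cos (L*(1-t)))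


lemma hasDerivAt_inner (L t : ℝ) : HasDerivAt (fun t : ℝ => L*(1-t)) (-L) t := by
  have h : HasDerivAt (fun t : ℝ => L*(1-t)) (L * (-1)) t :=
    (((hasDerivAt_id t).const_sub 1)).const_mul L
  simpa using h

lemma hasDerivAt_gstar {L t : ℝ} (h : Real.cos (L*(1-t)) ≠ 0) :
    HasDerivAt (gstar L) (2*L^2 / Real.cos (L*(1-t))^2) t := by
  have h1 : HasDerivAt (fun t : ℝ => Real.tan (L*(1-t)))
      ((1 / Real.cos (L*(1-t))^2) * (-L)) t :=
    (Real.hasDerivAt_tan h).comp (h₂ := Real.tan) t (hasDerivAt_inner L t)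
  have h2 := h1.const_mul (-(2*L))
  refine HasDerivAt.congr_deriv h2 ?_
  field_simp

lemma hasDerivAt_hstar {L t : ℝ} (h : 0 < Real.cos (L*(1-t))) :
    HasDerivAt (hstar L) (gstar L t) t := by
  have hc : HasDerivAt (fun t : ℝ => Real.cos (L*(1-t)))
      (-Real.sin (L*(1-t)) * (-L)) t :=
    (Real.hasDerivAt_cos _).comp t (hasDerivAt_inner L t)
  have hl : HasDerivAt (fun t : ℝ => Real.log (Real.cos (L*(1-t))))
      ((Real.cos (L*(1-t)))⁻¹ * (-Real.sin (L*(1-t)) * (-L))) t :=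
    (Real.hasDerivAt_log h.ne').comp (h₂ := Real.log) t hc
  have h2 := (hl.const_mul (2:ℝ)).const_sub (2*Real.log (Real.cos L))
  have : HasDerivAt (hstar L)
      (-(2 * ((Real.cos (L*(1-t)))⁻¹ * (-Real.sin (L*(1-t)) * (-L))))) t := by
    exact h2
  convert this using 1
  unfold gstar
  rw [Real.tan_eq_sin_div_cos]
  field_simp


lemma cos_pos_aux {L t : ℝ} (hL : L ∈ Set.Ioo 0 (π/2)) (ht : t ∈ Set.Icc (0:ℝ) 1) :
    0 < Real.cos (L*(1-t)) := by
  apply Real.cos_pos_of_mem_Ioo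
  obtain ⟨hL0, hL2⟩ := hL
  obtain ⟨ht0, ht1⟩ := ht
  constructor
  · nlinarith [Real.pi_pos]
  · nlinarith

lemma continuousOn_gstar {L : ℝ} (hL : L ∈ Set.Ioo 0 (π/2)) :
    ContinuousOn (gstar L) (Set.Icc 0 1) := by
  intro t ht
  apply ContinuousAt.continuousWithinAt
  apply ContinuousAt.mul continuousAt_const
  exact ContinuousAt.comp (g := Real.tan) (f := fun x : ℝ => L*(1-x)) (x := t)
    (Real.continuousAt_tan.mpr (cos_pos_aux hL ht).ne') (by fun_prop)

lemma continuousOn_hstar {L : ℝ} (hL : L ∈ Set.Ioo 0 (π/2)) :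
    ContinuousOn (hstar L) (Set.Icc 0 1) := by
  intro t ht
  apply ContinuousAt.continuousWithinAt
  apply ContinuousAt.sub continuousAt_const
  apply ContinuousAt.mul continuousAt_const
  exact ContinuousAt.comp (g := Real.log) (f := fun x : ℝ => Real.cos (L*(1-x))) (x := t)
    (Real.continuousAt_log (cos_pos_aux hL ht).ne') (by fun_prop)

lemma measurable_gstar (L : ℝ) : Measurable (gstar L) := by
  unfold gstar
  apply Measurable.mul measurable_const
  have htan : Measurable Real.tan := by
    rw [funext Real.tan_eq_sin_div_cos]
    exact Real.measurable_sin.div Real.measurable_cos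
  exact Measurable.comp (g := Real.tan) (f := fun x : ℝ => L*(1-x))
    htan (by fun_prop)

lemma exp_hstar {L t : ℝ} (hL : L ∈ Set.Ioo 0 (π/2)) (ht : t ∈ Set.Icc (0:ℝ) 1) :
    Real.exp (hstar L t) = Real.cos L ^ 2 / Real.cos (L*(1-t)) ^ 2 := by
  have h1 : 0 < Real.cos L := by
    apply Real.cos_pos_of_mem_Ioo; constructor
    · linarith [hL.1, Real.pi_pos]
    · exact hL.2
  have h2 := cos_pos_aux hL ht
  unfold hstar
  rw [show (2:ℝ)*Real.log (Real.cos L) = Real.log (Real.cos L ^2) by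
        rw [Real.log_pow]; push_cast; ring,
      show (2:ℝ)*Real.log (Real.cos (L*(1-t))) = Real.log (Real.cos (L*(1-t)) ^2) by
        rw [Real.log_pow]; push_cast; ring,
      Real.exp_sub, Real.exp_log (by positivity), Real.exp_log (by positivity)]


lemma intervalIntegrable_gstar {L : ℝ} (hL : L ∈ Set.Ioo 0 (π/2)) {a b : ℝ}
    (ha : a ∈ Set.Icc (0:ℝ) 1) (hb : b ∈ Set.Icc (0:ℝ) 1) :
    IntervalIntegrable (gstar L) volume a b := by
  apply ContinuousOn.intervalIntegrable
  apply (continuousOn_gstar hL).mono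
  rw [show Set.Icc (0:ℝ) 1 = Set.uIcc 0 1 from (Set.uIcc_of_le (by norm_num)).symm,
    Set.uIcc_subset_uIcc_iff_mem]
  constructor
  · rw [Set.uIcc_of_le (by norm_num)]; exact ha
  · rw [Set.uIcc_of_le (by norm_num)]; exact hb

lemma uIcc_sub {t : ℝ} (ht : t ∈ Set.Icc (0:ℝ) 1) :
    Set.uIcc (0:ℝ) t ⊆ Set.Icc 0 1 := by
  rw [Set.uIcc_of_le ht.1]
  exact Set.Icc_subset_Icc le_rfl ht.2

lemma ftc1 {L : ℝ} (hL : L ∈ Set.Ioo 0 (π/2)) {t : ℝ} (ht : t ∈ Set.Icc (0:ℝ) 1) :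
    ∫ s in (0:ℝ)..t, gstar L s = hstar L t := by
  have h0 : hstar L 0 = 0 := by simp [hstar]
  have := intervalIntegral.integral_eq_sub_of_hasDerivAt
    (f := hstar L) (f' := gstar L) (a := 0) (b := t)
    (fun x hx => hasDerivAt_hstar (cos_pos_aux hL (uIcc_sub ht hx)))
    (intervalIntegrable_gstar hL (Set.left_mem_Icc.mpr (by norm_num)) ht)
  rw [this, h0, sub_zero]

lemma ftc2 {L : ℝ} (hL : L ∈ Set.Ioo 0 (π/2)) :
    ∫ t in (0:ℝ)..1, Real.exp (hstar L t)
      = Real.cos L ^ 2 * Real.tan L / L := by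
  have h1 : Set.uIcc (0:ℝ) 1 = Set.Icc 0 1 := Set.uIcc_of_le (by norm_num)
  rw [intervalIntegral.integral_congr (g := fun t => Real.cos L ^2 / Real.cos (L*(1-t))^2)
    (by rw [h1]; intro t ht; exact exp_hstar hL ht)]
  have := intervalIntegral.integral_eq_sub_of_hasDerivAt
    (f := fun t => -(Real.cos L ^2 / L) * Real.tan (L*(1-t)))
    (f' := fun t => Real.cos L ^2 / Real.cos (L*(1-t))^2) (a := 0) (b := 1)
    (fun x hx => by
      have hc := cos_pos_aux hL (by rw [h1] at hx; exact hx)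
      have h3 : HasDerivAt (fun t : ℝ => Real.tan (L*(1-t)))
          ((1 / Real.cos (L*(1-x))^2) * (-L)) x :=
        (Real.hasDerivAt_tan hc.ne').comp (h₂ := Real.tan) x (by
          simpa using ((hasDerivAt_id x).const_sub 1).const_mul L)
      have h4 := h3.const_mul (-(Real.cos L ^2 / L))
      refine HasDerivAt.congr_deriv h4 ?_
      have hL0 : L ≠ 0 := hL.1.ne'
      field_simp)
    (by
      apply ContinuousOn.intervalIntegrable
      rw [h1]
      intro t ht
      exact (continuousOn_const.div ((Real.continuous_cos.comp (by fun_prop)).continuousOn.pow 2)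
        (fun x hx => pow_ne_zero 2 (cos_pos_aux hL hx).ne')) t ht)
  rw [this]
  have hL0 : L ≠ 0 := hL.1.ne'
  simp only [sub_self, mul_zero, mul_one, sub_zero]
  rw [Real.tan_zero]
  field_simp
  ring

lemma ftc3 {L : ℝ} (hL : L ∈ Set.Ioo 0 (π/2)) :
    ∫ t in (0:ℝ)..1, (gstar L t)^2 = 4*L*Real.tan L - 4*L^2 := by
  have h1 : Set.uIcc (0:ℝ) 1 = Set.Icc 0 1 := Set.uIcc_of_le (by norm_num)
  rw [intervalIntegral.integral_congr
    (g := fun t => 4*L^2 / Real.cos (L*(1-t))^2 - 4*L^2)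
    (by
      rw [h1]; intro t ht
      have hc := cos_pos_aux hL ht
      simp only [gstar]
      rw [Real.tan_eq_sin_div_cos]
      have hs2 : Real.sin (L*(1-t))^2 + Real.cos (L*(1-t))^2 = 1 :=
        Real.sin_sq_add_cos_sq _
      field_simp
      nlinarith [hs2])]
  have := intervalIntegral.integral_eq_sub_of_hasDerivAt
    (f := fun t => -(4*L) * Real.tan (L*(1-t)) - 4*L^2*t)
    (f' := fun t => 4*L^2 / Real.cos (L*(1-t))^2 - 4*L^2) (a := 0) (b := 1)
    (fun x hx => by
      have hc := cos_pos_aux hL (by rw [h1] at hx; exact hx)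
      have h3 : HasDerivAt (fun t : ℝ => Real.tan (L*(1-t)))
          ((1 / Real.cos (L*(1-x))^2) * (-L)) x :=
        (Real.hasDerivAt_tan hc.ne').comp (h₂ := Real.tan) x (by
          simpa using ((hasDerivAt_id x).const_sub 1).const_mul L)
      have h4 := (h3.const_mul (-(4*L))).sub
        (((hasDerivAt_id x).const_mul (4*L^2)))
      refine HasDerivAt.congr_deriv h4 ?_
      field_simp)
    (by
      apply ContinuousOn.intervalIntegrable
      rw [h1]
      intro t ht
      apply ContinuousWithinAt.sub _ continuousWithinAt_const
      exact (continuousOn_const.div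
        ((Real.continuous_cos.comp (by fun_prop)).continuousOn.pow 2)
        (fun x hx => pow_ne_zero 2 (cos_pos_aux hL hx).ne')) t ht)
  rw [this]
  simp only [show (1:ℝ)-1 = 0 by norm_num, show (1:ℝ)-0 = 1 by norm_num,
    mul_zero, mul_one, sub_zero, Real.tan_zero]
  ring

lemma ftc4 {L : ℝ} (hL : L ∈ Set.Ioo 0 (π/2)) {s : ℝ} (hs : s ∈ Set.Icc (0:ℝ) 1) :
    ∫ t in s..(1:ℝ), (2*L^2 / Real.cos (L*(1-t))^2) = -(gstar L s) := by
  have hsub : Set.uIcc s 1 ⊆ Set.Icc 0 1 := by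
    rw [Set.uIcc_of_le hs.2]
    exact Set.Icc_subset_Icc hs.1 le_rfl
  have := intervalIntegral.integral_eq_sub_of_hasDerivAt
    (f := gstar L)
    (f' := fun t => 2*L^2 / Real.cos (L*(1-t))^2) (a := s) (b := 1)
    (fun x hx => hasDerivAt_gstar (cos_pos_aux hL (hsub hx)).ne')
    (by
      apply ContinuousOn.intervalIntegrable
      intro t ht
      exact (continuousOn_const.div
        ((Real.continuous_cos.comp (by fun_prop)).continuousOn.pow 2)
        (fun x hx => pow_ne_zero 2 (cos_pos_aux hL (hsub hx)).ne')) t ht)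
  rw [this]
  have : gstar L 1 = 0 := by simp [gstar]
  rw [this, zero_sub]


lemma fubini_ibp (ψ w : ℝ → ℝ) (hψm : Measurable ψ)
    (hψ : IntegrableOn ψ (Set.Icc 0 1))
    (hwm : Measurable w) (hw : ContinuousOn w (Set.Icc 0 1)) :
    ∫ t in Set.Icc (0:ℝ) 1, w t * (∫ s in (0:ℝ)..t, ψ s)
      = ∫ s in Set.Icc (0:ℝ) 1, (∫ t in s..(1:ℝ), w t) * ψ s := by
  set I := Set.Icc (0:ℝ) 1 with hI
  set μ := volume.restrict I with hμ
  have hfin : IsFiniteMeasure μ := by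
    constructor
    rw [hμ, Measure.restrict_apply MeasurableSet.univ, Set.univ_inter, hI,
      Real.volume_Icc]
    norm_num
  obtain ⟨C, hC⟩ := isCompact_Icc.exists_bound_of_continuousOn hw
  have hC0 : 0 ≤ C := le_trans (norm_nonneg (w 0)) (hC 0 ⟨le_rfl, by norm_num⟩)
  set F : ℝ → ℝ → ℝ := fun t s => if s ≤ t then w t * ψ s else 0 with hF
  have hmeas : Measurable (Function.uncurry F) := by
    apply Measurable.ite (measurableSet_le measurable_snd measurable_fst)
    · exact (hwm.comp measurable_fst).mul (hψm.comp measurable_snd)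
    · exact measurable_const
  have haeI : ∀ᵐ p : ℝ × ℝ ∂(μ.prod μ), p.1 ∈ I ∧ p.2 ∈ I := by
    rw [hμ, Measure.prod_restrict]
    filter_upwards [ae_restrict_mem (measurableSet_Icc.prod measurableSet_Icc)] with p hp
    exact hp
  have hint : Integrable (Function.uncurry F) (μ.prod μ) := by
    apply Integrable.mono' (g := fun p : ℝ × ℝ => C * |ψ p.2|)
    · exact (integrable_const C).mul_prod hψ.abs
    · exact hmeas.aestronglyMeasurable
    · filter_upwards [haeI] with p hp
      simp only [hF, Function.uncurry]
      split_ifs with h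
      · rw [Real.norm_eq_abs, abs_mul]
        exact mul_le_mul_of_nonneg_right ((Real.norm_eq_abs (w p.1)) ▸ hC p.1 hp.1)
          (abs_nonneg _)
      · simp only [norm_zero]
        positivity
  have hswap := MeasureTheory.integral_integral_swap (f := F) (μ := μ) (ν := μ) hint
  have hL : (∫ t, (∫ s, F t s ∂μ) ∂μ) = ∫ t in I, w t * (∫ s in (0:ℝ)..t, ψ s) := by
    apply integral_congr_ae
    rw [hμ]
    filter_upwards [ae_restrict_mem measurableSet_Icc] with t ht
    have h1 : (fun s => F t s) = (Set.Iic t).indicator (fun s => w t * ψ s) :=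
      funext fun s => by simp [hF, Set.indicator_apply, Set.mem_Iic]
    rw [h1, integral_indicator measurableSet_Iic,
      Measure.restrict_restrict measurableSet_Iic]
    have h2 : Set.Iic t ∩ I = Set.Icc 0 t := by
      ext x
      simp only [Set.mem_inter_iff, Set.mem_Iic, hI, Set.mem_Icc]
      constructor
      · rintro ⟨h1, h2, h3⟩; exact ⟨h2, h1⟩
      · rintro ⟨h1, h2⟩; exact ⟨h2, h1, h2.trans ht.2⟩
    rw [h2, integral_const_mul,
      intervalIntegral.integral_of_le ht.1, ← integral_Icc_eq_integral_Ioc]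
  have hR : (∫ s, (∫ t, F t s ∂μ) ∂μ) = ∫ s in I, (∫ t in s..(1:ℝ), w t) * ψ s := by
    apply integral_congr_ae
    rw [hμ]
    filter_upwards [ae_restrict_mem measurableSet_Icc] with s hs
    have h1 : (fun t => F t s) = (Set.Ici s).indicator (fun t => w t * ψ s) :=
      funext fun t => by simp [hF, Set.indicator_apply, Set.mem_Ici]
    rw [h1, integral_indicator measurableSet_Ici,
      Measure.restrict_restrict measurableSet_Ici]
    have h2 : Set.Ici s ∩ I = Set.Icc s 1 := by
      ext x
      simp only [Set.mem_inter_iff, Set.mem_Ici, hI, Set.mem_Icc]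
      constructor
      · rintro ⟨h1, h2, h3⟩; exact ⟨h1, h3⟩
      · rintro ⟨h1, h2⟩; exact ⟨h1, hs.1.trans h1, h2⟩
    rw [h2, integral_mul_const,
      intervalIntegral.integral_of_le hs.2, ← integral_Icc_eq_integral_Ioc]
  rw [← hL, ← hR, hswap]


lemma cosL_pos {L : ℝ} (hL : L ∈ Set.Ioo 0 (π/2)) : 0 < Real.cos L := by
  have := cos_pos_aux hL (Set.left_mem_Icc.mpr (by norm_num))
  simpa using this

lemma measurable_hstar (L : ℝ) : Measurable (hstar L) := by
  unfold hstar
  apply Measurable.sub measurable_const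
  apply Measurable.mul measurable_const
  exact Real.measurable_log.comp (Real.measurable_cos.comp (by fun_prop))

lemma hb2c2 {b L : ℝ} (hL : L ∈ Set.Ioo 0 (π/2))
    (heq : L^2 / Real.cos L^2 = b^2) : b^2 * Real.cos L^2 = L^2 := by
  have hc := cosL_pos hL
  field_simp at heq
  linarith

lemma lower_bound {b L : ℝ} (hL : L ∈ Set.Ioo 0 (π/2))
    (heq : L^2 / Real.cos L^2 = b^2) (g : ℝ → ℝ) (hgm : Measurable g)
    (hg2 : IntegrableOn (fun t => (g t)^2) (Set.Icc 0 1)) :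
    4*L*Real.tan L - 2*L^2 ≤
      2*b^2 * (∫ t in (0:ℝ)..1, Real.exp (∫ s in (0:ℝ)..t, g s)) +
      (1/2) * ∫ t in (0:ℝ)..1, (g t - 0)^2 := by
  have hc := cosL_pos hL
  have hbc := hb2c2 hL heq
  set I := Set.Icc (0:ℝ) 1 with hI
  -- g is integrable on I
  have hg1 : IntegrableOn g I := by
    apply Integrable.mono' ((hg2.add (integrable_const 1)).const_mul (1/2))
    · exact hgm.aestronglyMeasurable
    · apply ae_of_all
      intro t
      rw [Real.norm_eq_abs]
      simp only [Pi.add_apply]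
      nlinarith [sq_nonneg (|g t| - 1), sq_abs (g t)]
  set h : ℝ → ℝ := fun t => ∫ s in (0:ℝ)..t, g s with hh
  have huIcc : Set.uIcc (0:ℝ) 1 = I := Set.uIcc_of_le (by norm_num)
  have hhc : ContinuousOn h I := by
    rw [← huIcc]
    exact intervalIntegral.continuousOn_primitive_interval (by rwa [huIcc])
  set w : ℝ → ℝ := fun t => 2*b^2 * Real.exp (hstar L t) with hw
  have hwm : Measurable w := by
    apply Measurable.mul measurable_const
    exact Real.measurable_exp.comp (measurable_hstar L)
  have hwc : ContinuousOn w I :=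
    continuousOn_const.mul (Real.continuous_exp.comp_continuousOn (continuousOn_hstar hL))
  have hw_id : ∀ t ∈ I, w t = 2*L^2 / Real.cos (L*(1-t))^2 := by
    intro t ht
    rw [hw]
    simp only
    rw [exp_hstar hL ht]
    have := (cos_pos_aux hL ht).ne'
    field_simp
    linarith [hbc]
  set ψ : ℝ → ℝ := fun t => g t - gstar L t with hψ
  have hψm : Measurable ψ := hgm.sub (measurable_gstar L)
  have hgsInt : IntegrableOn (gstar L) I := (continuousOn_gstar hL).integrableOn_Icc
  have hψInt : IntegrableOn ψ I := hg1.sub hgsInt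
  -- primitive identity
  have hprim : ∀ t ∈ I, h t - hstar L t = ∫ s in (0:ℝ)..t, ψ s := by
    intro t ht
    have hgi : IntervalIntegrable g volume 0 t :=
      (hg1.mono_set (uIcc_sub ht)).intervalIntegrable
    have hgsi : IntervalIntegrable (gstar L) volume 0 t :=
      intervalIntegrable_gstar hL (Set.left_mem_Icc.mpr (by norm_num)) ht
    rw [hψ]
    rw [intervalIntegral.integral_sub hgi hgsi, ftc1 hL ht]
  -- integrability of pieces
  have iexph : IntegrableOn (fun t => Real.exp (h t)) I :=
    (Real.continuous_exp.comp_continuousOn hhc).integrableOn_Icc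
  have iexphs : IntegrableOn (fun t => Real.exp (hstar L t)) I :=
    (Real.continuous_exp.comp_continuousOn (continuousOn_hstar hL)).integrableOn_Icc
  have igs2 : IntegrableOn (fun t => (gstar L t)^2) I :=
    ((continuousOn_gstar hL).pow 2).integrableOn_Icc
  have iwphi : IntegrableOn (fun t => w t * (h t - hstar L t)) I :=
    (hwc.mul (hhc.sub (continuousOn_hstar hL))).integrableOn_Icc
  obtain ⟨C, hC⟩ := isCompact_Icc.exists_bound_of_continuousOn (continuousOn_gstar hL)
  have igspsi : IntegrableOn (fun t => gstar L t * ψ t) I := by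
    apply Integrable.bdd_mul (c := C) hψInt (measurable_gstar L).aestronglyMeasurable
    filter_upwards [ae_restrict_mem measurableSet_Icc] with t ht
    exact hC t ht
  -- pointwise inequality
  have key : ∀ t ∈ I,
      2*b^2 * Real.exp (hstar L t) + (1/2)*(gstar L t)^2
        + (w t * (h t - hstar L t) + gstar L t * ψ t)
      ≤ 2*b^2 * Real.exp (h t) + (1/2)*(g t)^2 := by
    intro t ht
    have e0 := Real.add_one_le_exp (h t - hstar L t)
    have e1 : Real.exp (hstar L t) * ((h t - hstar L t) + 1) ≤ Real.exp (h t) := by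
      calc Real.exp (hstar L t) * ((h t - hstar L t) + 1)
          ≤ Real.exp (hstar L t) * Real.exp (h t - hstar L t) :=
            mul_le_mul_of_nonneg_left e0 (Real.exp_pos _).le
        _ = Real.exp (h t) := by rw [← Real.exp_add]; congr 1; ring
    have hb2 : (0:ℝ) ≤ 2*b^2 := by positivity
    have e2 : 2*b^2 * (Real.exp (hstar L t) * ((h t - hstar L t) + 1))
        ≤ 2*b^2 * Real.exp (h t) := mul_le_mul_of_nonneg_left e1 hb2
    have e3 : (0:ℝ) ≤ (1/2)*(g t - gstar L t)^2 := by positivity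
    rw [hw, hψ]
    simp only
    nlinarith [e2, e3]
  -- convert interval integrals to set integrals over I
  have conv1 : (∫ t in (0:ℝ)..1, Real.exp (∫ s in (0:ℝ)..t, g s))
      = ∫ t in I, Real.exp (h t) := by
    rw [intervalIntegral.integral_of_le (by norm_num : (0:ℝ) ≤ 1), hI,
      integral_Icc_eq_integral_Ioc]
  have conv2 : (∫ t in (0:ℝ)..1, (g t - 0)^2) = ∫ t in I, (g t)^2 := by
    simp only [sub_zero]
    rw [intervalIntegral.integral_of_le (by norm_num : (0:ℝ) ≤ 1), hI,
      integral_Icc_eq_integral_Ioc]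
  rw [conv1, conv2]
  -- main inequality between set integrals
  have main : ∫ t in I, (2*b^2 * Real.exp (hstar L t) + (1/2)*(gstar L t)^2
        + (w t * (h t - hstar L t) + gstar L t * ψ t))
      ≤ ∫ t in I, (2*b^2 * Real.exp (h t) + (1/2)*(g t)^2) := by
    apply setIntegral_mono_on
    · exact (((iexphs.const_mul _).add (igs2.const_mul _)).add (iwphi.add igspsi))
    · exact ((iexph.const_mul _).add (hg2.const_mul _))
    · exact measurableSet_Icc
    · exact key
  -- compute the left side
  have split1 : ∫ t in I, (2*b^2 * Real.exp (hstar L t) + (1/2)*(gstar L t)^2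
        + (w t * (h t - hstar L t) + gstar L t * ψ t))
      = (2*b^2 * ∫ t in I, Real.exp (hstar L t)) + ((1/2) * ∫ t in I, (gstar L t)^2)
        + ((∫ t in I, w t * (h t - hstar L t)) + ∫ t in I, gstar L t * ψ t) := by
    have ha : Integrable (fun t => 2*b^2 * Real.exp (hstar L t) + (1/2)*(gstar L t)^2)
        (volume.restrict I) := (iexphs.const_mul _).add (igs2.const_mul _)
    have hb' : Integrable (fun t => w t * (h t - hstar L t) + gstar L t * ψ t)
        (volume.restrict I) := iwphi.add igspsi
    rw [integral_add ha hb',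
      integral_add (iexphs.const_mul _) (igs2.const_mul _),
      integral_add iwphi igspsi, integral_const_mul, integral_const_mul]
  have split2 : ∫ t in I, (2*b^2 * Real.exp (h t) + (1/2)*(g t)^2)
      = 2*b^2 * (∫ t in I, Real.exp (h t)) + (1/2) * ∫ t in I, (g t)^2 := by
    rw [integral_add (iexph.const_mul _) (hg2.const_mul _), integral_const_mul,
      integral_const_mul]
  -- the cross terms cancel
  have cross : (∫ t in I, w t * (h t - hstar L t)) = - ∫ t in I, gstar L t * ψ t := by
    have c1 : (∫ t in I, w t * (h t - hstar L t))
        = ∫ t in I, w t * (∫ s in (0:ℝ)..t, ψ s) := by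
      apply setIntegral_congr_fun measurableSet_Icc
      intro t ht
      show w t * (h t - hstar L t) = w t * ∫ s in (0:ℝ)..t, ψ s
      rw [hprim t ht]
    rw [c1, fubini_ibp ψ w hψm hψInt hwm hwc]
    have c2 : ∀ s ∈ I, (∫ t in s..(1:ℝ), w t) * ψ s = -(gstar L s * ψ s) := by
      intro s hs
      have hw1 : (∫ t in s..(1:ℝ), w t)
          = ∫ t in s..(1:ℝ), (2*L^2 / Real.cos (L*(1-t))^2) := by
        apply intervalIntegral.integral_congr
        intro x hx
        apply hw_id
        rw [Set.uIcc_of_le hs.2] at hx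
        exact ⟨hs.1.trans hx.1, hx.2⟩
      rw [hw1, ftc4 hL hs]
      ring
    rw [setIntegral_congr_fun measurableSet_Icc c2, integral_neg]
  -- compute the explicit integrals
  have v1 : (∫ t in I, Real.exp (hstar L t)) = Real.cos L ^ 2 * Real.tan L / L := by
    rw [← ftc2 hL, intervalIntegral.integral_of_le (by norm_num : (0:ℝ) ≤ 1), hI,
      integral_Icc_eq_integral_Ioc]
  have v2 : (∫ t in I, (gstar L t)^2) = 4*L*Real.tan L - 4*L^2 := by
    rw [← ftc3 hL, intervalIntegral.integral_of_le (by norm_num : (0:ℝ) ≤ 1), hI,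
      integral_Icc_eq_integral_Ioc]
  have final : (2*b^2 * ∫ t in I, Real.exp (hstar L t)) + ((1/2) * ∫ t in I, (gstar L t)^2)
        + ((∫ t in I, w t * (h t - hstar L t)) + ∫ t in I, gstar L t * ψ t)
      = 4*L*Real.tan L - 2*L^2 := by
    have hL0 : L ≠ 0 := hL.1.ne'
    rw [cross, v1, v2, ← heq, Real.tan_eq_sin_div_cos]
    field_simp
    ring
  calc 4*L*Real.tan L - 2*L^2
      = (2*b^2 * ∫ t in I, Real.exp (hstar L t)) + ((1/2) * ∫ t in I, (gstar L t)^2)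
        + ((∫ t in I, w t * (h t - hstar L t)) + ∫ t in I, gstar L t * ψ t) := final.symm
    _ = ∫ t in I, (2*b^2 * Real.exp (hstar L t) + (1/2)*(gstar L t)^2
        + (w t * (h t - hstar L t) + gstar L t * ψ t)) := split1.symm
    _ ≤ ∫ t in I, (2*b^2 * Real.exp (h t) + (1/2)*(g t)^2) := main
    _ = 2*b^2 * (∫ t in I, Real.exp (h t)) + (1/2) * ∫ t in I, (g t)^2 := split2


lemma upper_val {b L : ℝ} (hL : L ∈ Set.Ioo 0 (π/2))
    (heq : L^2 / Real.cos L^2 = b^2) :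
    2*b^2 * (∫ t in (0:ℝ)..1, Real.exp (∫ s in (0:ℝ)..t, gstar L s)) +
      (1/2) * (∫ t in (0:ℝ)..1, (gstar L t - 0)^2) = 4*L*Real.tan L - 2*L^2 := by
  have h1 : (∫ t in (0:ℝ)..1, Real.exp (∫ s in (0:ℝ)..t, gstar L s))
      = ∫ t in (0:ℝ)..1, Real.exp (hstar L t) := by
    apply intervalIntegral.integral_congr
    intro t ht
    rw [Set.uIcc_of_le (by norm_num : (0:ℝ) ≤ 1)] at ht
    show Real.exp (∫ s in (0:ℝ)..t, gstar L s) = Real.exp (hstar L t)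
    rw [ftc1 hL ht]
  have h2 : (∫ t in (0:ℝ)..1, (gstar L t - 0)^2)
      = ∫ t in (0:ℝ)..1, (gstar L t)^2 := by
    simp
  have hL0 : L ≠ 0 := hL.1.ne'
  have hc := cosL_pos hL
  rw [h1, h2, ftc2 hL, ftc3 hL, ← heq, Real.tan_eq_sin_div_cos]
  field_simp
  ring

lemma value_eq {b L : ℝ} (hL : L ∈ Set.Ioo 0 (π/2))
    (heq : L^2 / Real.cos L^2 = b^2) :
    4*L*Real.tan L - 2*L^2 = 2*b^2*(Real.sin (2*L)/L - Real.cos L^2) := by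
  have hL0 : L ≠ 0 := hL.1.ne'
  have hc := cosL_pos hL
  rw [← heq, Real.sin_two_mul, Real.tan_eq_sin_div_cos]
  field_simp
  ring


/-- In the driftless case `ζ = 0`, with `λ ∈ (0, π/2)` solving
`λ²/cos²λ = b²`, we have `J_B(b,0) = 2b²(sin(2λ)/λ − cos²λ)`. -/
theorem JB_formula_zeta_zero (b lam : ℝ) (hb : 0 < b)
    (hlam : lam ∈ Set.Ioo 0 (π / 2))
    (heq : lam ^ 2 / Real.cos lam ^ 2 = b ^ 2) :
    JB b 0 = 2 * b ^ 2 * (Real.sin (2 * lam) / lam - Real.cos lam ^ 2) := by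
  unfold JB
  set V : ℝ := 2 * b ^ 2 * (Real.sin (2 * lam) / lam - Real.cos lam ^ 2) with hV
  have hveq : 4*lam*Real.tan lam - 2*lam^2 = V := value_eq hlam heq
  set S : Set ℝ := {y : ℝ | ∃ g : ℝ → ℝ, Measurable g ∧
    IntegrableOn (fun t => (g t) ^ 2) (Set.Icc 0 1) ∧
    y = 2 * b ^ 2 * (∫ t in (0:ℝ)..1, Real.exp (∫ s in (0:ℝ)..t, g s)) +
        (1 / 2) * ∫ t in (0:ℝ)..1, (g t - 0) ^ 2} with hS
  have hmem : V ∈ S := by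
    refine ⟨gstar lam, measurable_gstar lam,
      ((continuousOn_gstar hlam).pow 2).integrableOn_Icc, ?_⟩
    rw [← hveq, ← upper_val hlam heq]
  have hlb : ∀ y ∈ S, V ≤ y := by
    rintro y ⟨g, hgm, hg2, rfl⟩
    rw [← hveq]
    have := lower_bound hlam heq g hgm hg2
    calc 4*lam*Real.tan lam - 2*lam^2
        ≤ 2*b^2 * (∫ t in (0:ℝ)..1, Real.exp (∫ s in (0:ℝ)..t, g s)) +
          (1/2) * ∫ t in (0:ℝ)..1, (g t - 0)^2 := this
      _ = 2 * b ^ 2 * (∫ t in (0:ℝ)..1, Real.exp (∫ s in (0:ℝ)..t, g s)) +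
          (1 / 2) * ∫ t in (0:ℝ)..1, (g t - 0) ^ 2 := by ring
  exact le_antisymm (csInf_le ⟨V, hlb⟩ hmem) (le_csInf ⟨V, hmem⟩ hlb)
end
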